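/- Let m, n ≥ 1 and let Z = (z_{jk}) be an m×n matrix with z_{jk} > 0 for all j,k. Let M_q be the unique symmetric (m+n)×(m+n) matrix with x^T M_q x = q(x) for all x ∈ ℝ^{m+n}, where q is the quadratic form associated to Z. Let det(q|_H) denote the product of the nonzero eigenvalues of M_q. Then det(q|_H) = (m+n) · 2^{1−m−n} · det Q, where Q is the (m+n−1)×(m+n−1) symmetric matrix associated to Z. -/

import Mathlib

/-- The quadratic form `q` associated to a positive `m × n` matrix `Z`, viewed as a form
on `ℝ^{m+n}`: `q(x) = (1/2) ∑_{j,k} (z_{jk}² + z_{jk})(x_j + x_{m+k})²`. -/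
noncomputable def qformTotal {m n : ℕ} (z : Fin m → Fin n → ℝ)
    (x : Fin (m + n) → ℝ) : ℝ :=
  (1 / 2) * ∑ j : Fin m, ∑ k : Fin n,
    (z j k ^ 2 + z j k) * (x (Fin.castAdd n j) + x (Fin.natAdd m k)) ^ 2

/-- The `(m+n−1) × (m+n−1)` symmetric matrix `Q` associated to `Z`: off-diagonal entries
`Q_{j, m+k} = Q_{m+k, j} = z_{jk}² + z_{jk}` for `j < m`, `k < n−1`; diagonal entries
`Q_{jj} = ∑_k (z_{jk} + z_{jk}²)` for `j < m` and `Q_{m+k, m+k} = ∑_j (z_{jk} + z_{jk}²)`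
for `k < n−1`; all other entries `0`. -/
noncomputable def Qmat {m n : ℕ} (z : Fin m → Fin n → ℝ) :
    Matrix (Fin (m + n - 1)) (Fin (m + n - 1)) ℝ :=
  Matrix.of fun i j =>
    if hi : (i : ℕ) < m then
      if hj : (j : ℕ) < m then
        if i = j then ∑ k : Fin n, (z ⟨i, hi⟩ k + z ⟨i, hi⟩ k ^ 2) else 0
      else
        z ⟨i, hi⟩ ⟨(j : ℕ) - m, by have := j.isLt; omega⟩ ^ 2
          + z ⟨i, hi⟩ ⟨(j : ℕ) - m, by have := j.isLt; omega⟩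
    else
      if hj : (j : ℕ) < m then
        z ⟨j, hj⟩ ⟨(i : ℕ) - m, by have := i.isLt; omega⟩ ^ 2
          + z ⟨j, hj⟩ ⟨(i : ℕ) - m, by have := i.isLt; omega⟩
      else
        if i = j then
          ∑ l : Fin m, (z l ⟨(i : ℕ) - m, by have := i.isLt; omega⟩
            + z l ⟨(i : ℕ) - m, by have := i.isLt; omega⟩ ^ 2)
        else 0

/-!
`M_q` is positive semidefinite and `q` vanishes exactly on the line through
`v = (1, …, 1, -1, …, -1)`, so exactly one eigenvalue of `M_q` is zero and the product of the
others is `tr (adj M_q)`. Since `M_q * adj M_q = det M_q • 1 = 0` and `adj M_q` is symmetric,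
`adj M_q = c • v vᵀ`; hence `tr (adj M_q) = (m + n) c`, where `c` is the last diagonal entry of
`adj M_q`, i.e. the determinant of the leading principal minor of `M_q` of size `m + n - 1`.
That minor is `Q / 2`.
-/

open Matrix Finset Module

namespace Matrix

variable {ι : Type*} [Fintype ι] [DecidableEq ι]

theorem IsSymm.ext_of_dotProduct_mulVec {K : Type*} [Field K] [CharZero K] {A B : Matrix ι ι K}
    (hA : A.IsSymm) (hB : B.IsSymm) (h : ∀ x, x ⬝ᵥ A *ᵥ x = x ⬝ᵥ B *ᵥ x) : A = B := by
  ext i j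
  have hi := h (Pi.single i 1)
  have hj := h (Pi.single j 1)
  have hij := h (Pi.single i 1 + Pi.single j 1)
  simp only [mulVec_add, dotProduct_add, add_dotProduct, mulVec_single_one,
    single_one_dotProduct, col_apply] at hi hj hij
  have hAji : A j i = A i j := hA.apply i j
  have hBji : B j i = B i j := hB.apply i j
  have h2 : (2 : K) * (A i j - B i j) = 0 := by linear_combination hij - hi - hj - hAji + hBji
  simpa [sub_eq_zero] using h2

theorem IsHermitian.card_eigenvalues_eq_zero {𝕜 : Type*} [RCLike 𝕜] {A : Matrix ι ι 𝕜}
    (hA : A.IsHermitian) :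
    Fintype.card {i // hA.eigenvalues i = 0} = finrank 𝕜 (LinearMap.ker A.mulVecLin) := by
  have hrank : finrank 𝕜 (LinearMap.range A.mulVecLin) = _ := hA.rank_eq_card_non_zero_eigs
  have hnullity := A.mulVecLin.finrank_range_add_finrank_ker
  rw [Fintype.card_subtype_compl] at hrank
  rw [finrank_fintype_fun_eq_card] at hnullity
  have := Fintype.card_subtype_le fun i => hA.eigenvalues i = 0
  omega

theorem IsHermitian.trace_adjugate {𝕜 : Type*} [RCLike 𝕜] {A : Matrix ι ι 𝕜}
    (hA : A.IsHermitian) :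
    A.adjugate.trace = ∑ i, ∏ j ∈ univ.erase i, (hA.eigenvalues j : 𝕜) := by
  set U : Matrix ι ι 𝕜 := (hA.eigenvectorUnitary : Matrix ι ι 𝕜)
  set D : Matrix ι ι 𝕜 := diagonal (RCLike.ofReal ∘ hA.eigenvalues)
  have hU : star U * U = 1 := Unitary.star_mul_self_of_mem hA.eigenvectorUnitary.2
  calc A.adjugate.trace = (U * D * star U).adjugate.trace := by
        conv_lhs => rw [hA.spectral_theorem, Unitary.conjStarAlgAut_apply]
    _ = (U.adjugate * (star U).adjugate * D.adjugate).trace := by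
        rw [adjugate_mul_distrib, adjugate_mul_distrib, ← mul_assoc, trace_mul_cycle]
    _ = D.adjugate.trace := by
        rw [← adjugate_mul_distrib, hU, adjugate_one, one_mul]
    _ = ∑ i, ∏ j ∈ univ.erase i, (hA.eigenvalues j : 𝕜) := by
        rw [adjugate_diagonal, trace_diagonal]; rfl

theorem IsHermitian.trace_adjugate_eq_prod_eigenvalues_ne_zero {𝕜 : Type*} [RCLike 𝕜]
    {A : Matrix ι ι 𝕜} (hA : A.IsHermitian) (hker : finrank 𝕜 (LinearMap.ker A.mulVecLin) = 1) :
    A.adjugate.trace =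
      ∏ i ∈ univ.filter (fun i => hA.eigenvalues i ≠ 0), (hA.eigenvalues i : 𝕜) := by
  rw [← hA.card_eigenvalues_eq_zero, Fintype.card_eq_one_iff] at hker
  obtain ⟨⟨i₀, hi₀⟩, huniq⟩ := hker
  have hzero : ∀ i, hA.eigenvalues i = 0 ↔ i = i₀ :=
    fun i => ⟨fun hi => congrArg Subtype.val (huniq ⟨i, hi⟩), fun h => h ▸ hi₀⟩
  rw [hA.trace_adjugate, Finset.sum_eq_single i₀]
  · congr 1
    ext j
    simp [hzero]
  · intro i _ hi
    exact prod_eq_zero (mem_erase.mpr ⟨fun h => hi h.symm, mem_univ _⟩) (by simp [hi₀])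
  · simp

theorem exists_adjugate_eq_smul_vecMulVec {K : Type*} [Field K] {A : Matrix ι ι K}
    (hA : A.IsSymm) (hdet : A.det = 0) {v : ι → K} (hv : v ≠ 0)
    (hker : LinearMap.ker A.mulVecLin ≤ K ∙ v) : ∃ c : K, A.adjugate = c • vecMulVec v v := by
  have hcol : ∀ j, ∃ c : K, c • v = fun i => A.adjugate i j := by
    intro j
    refine Submodule.mem_span_singleton.mp (hker ?_)
    ext i
    simp [mulVec, dotProduct, ← mul_apply, mul_adjugate, hdet]
  choose c hc using hcol
  have hadj : ∀ i j, A.adjugate i j = c j * v i := fun i j => by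
    simpa using (congrFun (hc j) i).symm
  have hsymm : ∀ i j, A.adjugate i j = A.adjugate j i := fun i j => by
    rw [← transpose_apply A.adjugate, adjugate_transpose, hA.eq]
  obtain ⟨e, he⟩ : ∃ e, v e ≠ 0 := Function.ne_iff.mp hv
  refine ⟨c e / v e, ?_⟩
  ext i j
  have hcj : c j * v e = c e * v j := by rw [← hadj, ← hadj, hsymm]
  simp only [hadj, smul_apply, vecMulVec_apply, smul_eq_mul]
  field_simp
  linear_combination v i * hcj

theorem adjugate_last_last {R : Type*} [CommRing R] {k : ℕ}
    (A : Matrix (Fin (k + 1)) (Fin (k + 1)) R) :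
    A.adjugate (Fin.last k) (Fin.last k) = (A.submatrix Fin.castSucc Fin.castSucc).det := by
  rw [adjugate_fin_succ_eq_det_submatrix, Fin.succAbove_last, Fin.val_last, ← two_mul,
    pow_mul, neg_one_sq, one_pow, one_mul]

end Matrix

def signVec (m n : ℕ) : Fin (m + n) → ℝ := Fin.append (fun _ => 1) (fun _ => -1)

@[simp] lemma signVec_castAdd {m n : ℕ} (j : Fin m) : signVec m n (Fin.castAdd n j) = 1 :=
  Fin.append_left _ _ j

@[simp] lemma signVec_natAdd {m n : ℕ} (k : Fin n) : signVec m n (Fin.natAdd m k) = -1 :=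
  Fin.append_right _ _ k

lemma signVec_last (m b : ℕ) : signVec m (b + 1) (Fin.last (m + b)) = -1 :=
  signVec_natAdd (Fin.last b)

lemma signVec_ne_zero {m n : ℕ} (hn : 1 ≤ n) : signVec m n ≠ 0 := fun h => by
  have := congrFun h (Fin.natAdd m ⟨0, hn⟩)
  rw [signVec_natAdd] at this
  norm_num at this

lemma signVec_dotProduct_self (m n : ℕ) : signVec m n ⬝ᵥ signVec m n = m + n := by
  simp [dotProduct, Fin.sum_univ_add]

section qform

variable {m n : ℕ} {z : Fin m → Fin n → ℝ}

lemma qformTotal_term_nonneg (hz : ∀ j k, 0 < z j k) (x : Fin (m + n) → ℝ)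
    (j : Fin m) (k : Fin n) :
    0 ≤ (z j k ^ 2 + z j k) * (x (Fin.castAdd n j) + x (Fin.natAdd m k)) ^ 2 := by
  have := hz j k
  positivity

lemma qformTotal_nonneg (hz : ∀ j k, 0 < z j k) (x : Fin (m + n) → ℝ) : 0 ≤ qformTotal z x :=
  mul_nonneg (by norm_num) <| sum_nonneg fun j _ => sum_nonneg fun k _ =>
    qformTotal_term_nonneg hz x j k

lemma qformTotal_eq_zero_iff (hz : ∀ j k, 0 < z j k) (x : Fin (m + n) → ℝ) :
    qformTotal z x = 0 ↔ ∀ j k, x (Fin.castAdd n j) + x (Fin.natAdd m k) = 0 := by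
  have hterm := qformTotal_term_nonneg hz x
  rw [qformTotal, mul_eq_zero, or_iff_right (by norm_num),
    sum_eq_zero_iff_of_nonneg fun j _ => sum_nonneg fun k _ => hterm j k]
  simp_rw [sum_eq_zero_iff_of_nonneg fun k _ => hterm _ k]
  have hw : ∀ j k, z j k ^ 2 + z j k ≠ 0 := fun j k => by have := hz j k; positivity
  simp [hw]

lemma forall_add_eq_zero_iff_mem_span_signVec (hm : 1 ≤ m) (hn : 1 ≤ n) (x : Fin (m + n) → ℝ) :
    (∀ j k, x (Fin.castAdd n j) + x (Fin.natAdd m k) = 0) ↔ x ∈ ℝ ∙ signVec m n := by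
  rw [Submodule.mem_span_singleton]
  constructor
  · intro h
    refine ⟨x (Fin.castAdd n ⟨0, hm⟩), funext fun i => Fin.addCases (fun j => ?_) (fun k => ?_) i⟩
    · have := h j ⟨0, hn⟩
      have := h ⟨0, hm⟩ ⟨0, hn⟩
      simp only [Pi.smul_apply, signVec_castAdd, smul_eq_mul, mul_one]
      linarith
    · have := h ⟨0, hm⟩ k
      simp only [Pi.smul_apply, signVec_natAdd, smul_eq_mul, mul_neg_one]
      linarith
  · rintro ⟨c, rfl⟩ j k
    simp

end qform

/-- Twice `M_q`, written with the formula of `Qmat` on all `m + n` indices so that `Qmat z` is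
its leading principal minor. -/
noncomputable def qformHessian {m n : ℕ} (z : Fin m → Fin n → ℝ) :
    Matrix (Fin (m + n)) (Fin (m + n)) ℝ :=
  Matrix.of fun i j =>
    if hi : (i : ℕ) < m then
      if hj : (j : ℕ) < m then
        if i = j then ∑ k : Fin n, (z ⟨i, hi⟩ k + z ⟨i, hi⟩ k ^ 2) else 0
      else
        z ⟨i, hi⟩ ⟨(j : ℕ) - m, by have := j.isLt; omega⟩ ^ 2
          + z ⟨i, hi⟩ ⟨(j : ℕ) - m, by have := j.isLt; omega⟩
    else
      if hj : (j : ℕ) < m then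
        z ⟨j, hj⟩ ⟨(i : ℕ) - m, by have := i.isLt; omega⟩ ^ 2
          + z ⟨j, hj⟩ ⟨(i : ℕ) - m, by have := i.isLt; omega⟩
      else
        if i = j then
          ∑ l : Fin m, (z l ⟨(i : ℕ) - m, by have := i.isLt; omega⟩
            + z l ⟨(i : ℕ) - m, by have := i.isLt; omega⟩ ^ 2)
        else 0

section qformHessian

variable {m n : ℕ} (z : Fin m → Fin n → ℝ)

@[simp] lemma qformHessian_castAdd_castAdd (j j' : Fin m) :
    qformHessian z (Fin.castAdd n j) (Fin.castAdd n j') =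
      if j = j' then ∑ k, (z j k + z j k ^ 2) else 0 := by
  simp [qformHessian, Fin.ext_iff]

@[simp] lemma qformHessian_castAdd_natAdd (j : Fin m) (k : Fin n) :
    qformHessian z (Fin.castAdd n j) (Fin.natAdd m k) = z j k ^ 2 + z j k := by
  simp [qformHessian]

@[simp] lemma qformHessian_natAdd_castAdd (k : Fin n) (j : Fin m) :
    qformHessian z (Fin.natAdd m k) (Fin.castAdd n j) = z j k ^ 2 + z j k := by
  simp [qformHessian]

@[simp] lemma qformHessian_natAdd_natAdd (k k' : Fin n) :
    qformHessian z (Fin.natAdd m k) (Fin.natAdd m k') =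
      if k = k' then ∑ l, (z l k + z l k ^ 2) else 0 := by
  simp [qformHessian, Fin.ext_iff]

lemma isSymm_qformHessian : (qformHessian z).IsSymm := by
  refine IsSymm.ext fun i j => ?_
  induction i using Fin.addCases <;> induction j using Fin.addCases <;>
    simp only [qformHessian_castAdd_castAdd, qformHessian_castAdd_natAdd,
      qformHessian_natAdd_castAdd, qformHessian_natAdd_natAdd, eq_comm] <;>
    split_ifs <;> simp_all

lemma dotProduct_qformHessian_mulVec (x : Fin (m + n) → ℝ) :
    x ⬝ᵥ qformHessian z *ᵥ x = 2 * qformTotal z x := by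
  simp only [dotProduct, mulVec, Fin.sum_univ_add, qformHessian_castAdd_castAdd,
    qformHessian_castAdd_natAdd, qformHessian_natAdd_castAdd, qformHessian_natAdd_natAdd,
    ite_mul, zero_mul, sum_ite_eq, mem_univ, if_true, qformTotal]
  simp only [sum_mul, mul_add, mul_sum, ← sum_add_distrib]
  rw [sum_comm (s := (univ : Finset (Fin n))), ← sum_add_distrib]
  refine sum_congr rfl fun j _ => ?_
  rw [← sum_add_distrib]
  exact sum_congr rfl fun k _ => by ring

lemma qformHessian_submatrix_castSucc {b : ℕ} (z : Fin m → Fin (b + 1) → ℝ) :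
    (qformHessian z).submatrix Fin.castSucc Fin.castSucc = Qmat z := by
  ext i j
  simp [qformHessian, Qmat, Fin.castSucc_inj]

variable {z}

lemma eq_inv_two_smul_qformHessian {A : Matrix (Fin (m + n)) (Fin (m + n)) ℝ} (hA : A.IsSymm)
    (hrep : ∀ x, x ⬝ᵥ A *ᵥ x = qformTotal z x) : A = (2⁻¹ : ℝ) • qformHessian z :=
  hA.ext_of_dotProduct_mulVec ((isSymm_qformHessian z).smul _) fun x => by
    rw [hrep, smul_mulVec, dotProduct_smul, dotProduct_qformHessian_mulVec, smul_eq_mul]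
    ring

lemma adjugate_last_last_eq_det_Qmat {b : ℕ} {z : Fin m → Fin (b + 1) → ℝ}
    {A : Matrix (Fin (m + (b + 1))) (Fin (m + (b + 1))) ℝ} (hA : A.IsSymm)
    (hrep : ∀ x, x ⬝ᵥ A *ᵥ x = qformTotal z x) :
    A.adjugate (Fin.last (m + b)) (Fin.last (m + b)) = (2⁻¹ : ℝ) ^ (m + b) * (Qmat z).det := by
  have hminor : A.submatrix Fin.castSucc Fin.castSucc = (2⁻¹ : ℝ) • Qmat z := by
    rw [eq_inv_two_smul_qformHessian hA hrep, ← qformHessian_submatrix_castSucc]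
    rfl
  rw [adjugate_last_last (k := m + b), hminor, det_smul, Fintype.card_fin]

lemma ker_mulVecLin_eq_span_signVec (hz : ∀ j k, 0 < z j k) (hm : 1 ≤ m) (hn : 1 ≤ n)
    {A : Matrix (Fin (m + n)) (Fin (m + n)) ℝ} (hA : A.IsHermitian)
    (hrep : ∀ x, x ⬝ᵥ A *ᵥ x = qformTotal z x) :
    LinearMap.ker A.mulVecLin = ℝ ∙ signVec m n := by
  have hpsd : A.PosSemidef := .of_dotProduct_mulVec_nonneg hA fun x => by
    simpa [hrep] using qformTotal_nonneg hz x
  ext x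
  rw [LinearMap.mem_ker, mulVecLin_apply, ← hpsd.dotProduct_mulVec_zero_iff, star_trivial, hrep,
    qformTotal_eq_zero_iff hz, forall_add_eq_zero_iff_mem_span_signVec hm hn]

end qformHessian

/-- Change of coordinate basis: the product of the nonzero eigenvalues of the symmetric
matrix `M_q` representing `q` (i.e. `det(q|_H)`) equals `(m+n) · 2^{1−m−n} · det Q`. -/
theorem det_q_restricted_eq (m n : ℕ) (hm : 1 ≤ m) (hn : 1 ≤ n)
    (z : Fin m → Fin n → ℝ) (hz : ∀ j k, 0 < z j k)
    (Mq : Matrix (Fin (m + n)) (Fin (m + n)) ℝ)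
    (hMq : Mq.IsHermitian)
    (hrep : ∀ x : Fin (m + n) → ℝ, dotProduct x (Mq.mulVec x) = qformTotal z x) :
    (∏ i ∈ Finset.univ.filter (fun i => hMq.eigenvalues i ≠ 0), hMq.eigenvalues i)
      = ((m : ℝ) + n) * (2 : ℝ) ^ ((1 : ℤ) - m - n) * (Qmat z).det := by
  obtain ⟨b, rfl⟩ : ∃ b, n = b + 1 := ⟨n - 1, by omega⟩
  have hsymm : Mq.IsSymm := isHermitian_iff_isSymm.mp hMq
  have hker := ker_mulVecLin_eq_span_signVec hz hm hn hMq hrep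
  have hv : signVec m (b + 1) ≠ 0 := signVec_ne_zero hn
  have hdet : Mq.det = 0 := exists_mulVec_eq_zero_iff.mp ⟨_, hv, by
    rw [← mulVecLin_apply, ← LinearMap.mem_ker, hker]
    exact Submodule.mem_span_singleton_self _⟩
  obtain ⟨c, hc⟩ := exists_adjugate_eq_smul_vecMulVec hsymm hdet hv hker.le
  have hc_eq : c = (2⁻¹ : ℝ) ^ (m + b) * (Qmat z).det := by
    simpa [hc, vecMulVec_apply, signVec_last] using adjugate_last_last_eq_det_Qmat hsymm hrep
  have hexp : (2 : ℝ) ^ ((1 : ℤ) - m - (b + 1 : ℕ)) = (2⁻¹ : ℝ) ^ (m + b) := by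
    rw [inv_pow, ← zpow_natCast, ← _root_.zpow_neg]
    congr 1
    push_cast
    ring
  have htrace := hMq.trace_adjugate_eq_prod_eigenvalues_ne_zero
    (by rw [hker, finrank_span_singleton hv])
  rw [hc, trace_smul, trace_vecMulVec, signVec_dotProduct_self, hc_eq] at htrace
  simp only [RCLike.ofReal_real_eq_id, id] at htrace
  rw [hexp, ← htrace]
  push_cast
  ring
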